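/- arXiv:1306.5540 — 3 statements merged into one kernel-verified Lean document; each statement's English description precedes it below -/
import Mathlib

section
/- Let φ : ℕ → ℂ be such that both h = (φ(i+j) - φ(i+j+1))_{i,j≥0} and k = (φ(i+j+1) - φ(i+j+2))_{i,j≥0} are trace class on ℓ²(ℕ). Then Σ_{n=0}^∞ |φ(n) - φ(n+1)| ≤ ‖h‖₁ + ‖k‖₁ < ∞, where ‖·‖₁ is the trace-class norm. -/
open scoped ComplexConjugate
open Filter
noncomputable section

/-- The Hilbert space ℓ²(ℕ). -/
abbrev l2 : Type := lp (fun _ : ℕ => ℂ) 2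

/-- Standard orthonormal basis vector. -/
noncomputable def eb (n : ℕ) : l2 := lp.single 2 n 1

/-- The rank-one operator `(u ⊙ v)(t) = ⟨t, v⟩ u`. -/
noncomputable def rankOne (u v : l2) : l2 →L[ℂ] l2 := (innerSL ℂ v).smulRight u

/-- `x, y` form a rank-one decomposition of `T` with summable norms. -/
def IsTCDecomp (T : l2 →L[ℂ] l2) (x y : ℕ → l2) : Prop :=
  Summable (fun i => ‖x i‖ * ‖y i‖) ∧
  ∀ ξ : l2, HasSum (fun i => rankOne (x i) (y i) ξ) (T ξ)

/-- `T` is of trace class. -/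
def TraceClass (T : l2 →L[ℂ] l2) : Prop := ∃ x y, IsTCDecomp T x y

/-- The trace-class (nuclear) norm `‖T‖₁`. -/
noncomputable def traceNorm (T : l2 →L[ℂ] l2) : ℝ :=
  sInf { c | ∃ x y, IsTCDecomp T x y ∧ c = ∑' i, ‖x i‖ * ‖y i‖ }

/-- `T` has matrix entries `ψ(i+j)` in the standard basis, i.e. `T` is the Hankel
matrix of the sequence `ψ`. -/
def HasHankel (T : l2 →L[ℂ] l2) (ψ : ℕ → ℂ) : Prop :=
  ∀ i j : ℕ, (inner ℂ (eb i) (T (eb j)) : ℂ) = ψ (i + j)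

/-!
The diagonal entries of the Hankel matrices `h` and `k` are `φ(2i) - φ(2i+1)` and
`φ(2i+1) - φ(2i+2)`, so the series splits into the two diagonals. If `T = ∑ₘ xₘ ⊙ yₘ`, then
`|⟪eᵢ, T eᵢ⟫| ≤ ∑ₘ |⟪eᵢ, xₘ⟫| |⟪eᵢ, yₘ⟫|`; summing over `i` first, Cauchy–Schwarz and Bessel's
inequality bound the diagonal sum by `∑ₘ ‖xₘ‖ ‖yₘ‖`, and taking the infimum over decompositions
bounds it by `‖T‖₁`.
-/

open scoped InnerProductSpace

section Orthonormal

variable {𝕜 E ι κ : Type*} [RCLike 𝕜] [NormedAddCommGroup E] [InnerProductSpace 𝕜 E]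
  {e : ι → E}

theorem Orthonormal.sum_norm_inner_mul_norm_inner_le (he : Orthonormal 𝕜 e) (x y : E)
    (s : Finset ι) : ∑ i ∈ s, ‖⟪e i, x⟫_𝕜‖ * ‖⟪e i, y⟫_𝕜‖ ≤ ‖x‖ * ‖y‖ :=
  calc ∑ i ∈ s, ‖⟪e i, x⟫_𝕜‖ * ‖⟪e i, y⟫_𝕜‖
      ≤ √(∑ i ∈ s, ‖⟪e i, x⟫_𝕜‖ ^ 2) * √(∑ i ∈ s, ‖⟪e i, y⟫_𝕜‖ ^ 2) :=
        Real.sum_mul_le_sqrt_mul_sqrt _ _ _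
    _ ≤ √(‖x‖ ^ 2) * √(‖y‖ ^ 2) := by
        gcongr <;> exact he.sum_inner_products_le _
    _ = ‖x‖ * ‖y‖ := by simp

theorem Orthonormal.summable_and_tsum_norm_inner_diag_le (he : Orthonormal 𝕜 e) {T : E → E}
    {x y : κ → E} (hxy : Summable fun m => ‖x m‖ * ‖y m‖)
    (hT : ∀ ξ, HasSum (fun m => ⟪y m, ξ⟫_𝕜 • x m) (T ξ)) :
    Summable (fun i => ‖⟪e i, T (e i)⟫_𝕜‖) ∧
      ∑' i, ‖⟪e i, T (e i)⟫_𝕜‖ ≤ ∑' m, ‖x m‖ * ‖y m‖ := by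
  set g : ι → κ → ℝ := fun i m => ‖⟪e i, x m⟫_𝕜‖ * ‖⟪e i, y m⟫_𝕜‖
  have hg : ∀ i, Summable (g i) := fun i =>
    hxy.of_nonneg_of_le (fun m => by positivity) fun m => by
      simpa using he.sum_norm_inner_mul_norm_inner_le (x m) (y m) {i}
  have hdiag : ∀ i, ‖⟪e i, T (e i)⟫_𝕜‖ ≤ ∑' m, g i m := by
    intro i
    have hsum : HasSum (fun m => ⟪y m, e i⟫_𝕜 * ⟪e i, x m⟫_𝕜) ⟪e i, T (e i)⟫_𝕜 := by
      simpa [inner_smul_right, mul_comm] using (hT (e i)).mapL (innerSL 𝕜 (e i))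
    have hnorm : (fun m => ‖⟪y m, e i⟫_𝕜 * ⟪e i, x m⟫_𝕜‖) = g i := by
      ext m; rw [norm_mul, norm_inner_symm, mul_comm]
    rw [← hsum.tsum_eq, ← hnorm]
    exact norm_tsum_le_tsum_norm (hnorm ▸ hg i)
  have hfin : ∀ s : Finset ι, ∑ i ∈ s, ‖⟪e i, T (e i)⟫_𝕜‖ ≤ ∑' m, ‖x m‖ * ‖y m‖ := fun s =>
    calc ∑ i ∈ s, ‖⟪e i, T (e i)⟫_𝕜‖
        ≤ ∑ i ∈ s, ∑' m, g i m := Finset.sum_le_sum fun i _ => hdiag i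
      _ = ∑' m, ∑ i ∈ s, g i m := (Summable.tsum_finsetSum fun i _ => hg i).symm
      _ ≤ ∑' m, ‖x m‖ * ‖y m‖ :=
          (summable_sum fun i _ => hg i).tsum_le_tsum
            (fun m => he.sum_norm_inner_mul_norm_inner_le (x m) (y m) s) hxy
  exact ⟨summable_of_sum_le (fun i => norm_nonneg _) hfin,
    Real.tsum_le_of_sum_le (fun i => norm_nonneg _) hfin⟩

end Orthonormal

theorem eb_orthonormal : Orthonormal ℂ eb := by
  rw [orthonormal_iff_ite]
  intro i j
  rw [eb, eb, lp.inner_single_left]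
  simp [lp.single_apply, Pi.single_apply]

theorem TraceClass.summable_and_tsum_norm_inner_diag_le_traceNorm {T : l2 →L[ℂ] l2}
    (hT : TraceClass T) :
    Summable (fun i => ‖⟪eb i, T (eb i)⟫_ℂ‖) ∧ ∑' i, ‖⟪eb i, T (eb i)⟫_ℂ‖ ≤ traceNorm T := by
  have hdecomp : ∀ {x y}, IsTCDecomp T x y →
      Summable (fun i => ‖⟪eb i, T (eb i)⟫_ℂ‖) ∧
        ∑' i, ‖⟪eb i, T (eb i)⟫_ℂ‖ ≤ ∑' m, ‖x m‖ * ‖y m‖ := fun hd =>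
    eb_orthonormal.summable_and_tsum_norm_inner_diag_le hd.1 hd.2
  obtain ⟨x, y, hd⟩ := hT
  refine ⟨(hdecomp hd).1, le_csInf ⟨_, x, y, hd, rfl⟩ ?_⟩
  rintro c ⟨x', y', hd', rfl⟩
  exact (hdecomp hd').2

theorem HasHankel.summable_and_tsum_norm_apply_two_mul_le_traceNorm {T : l2 →L[ℂ] l2} {ψ : ℕ → ℂ}
    (hH : HasHankel T ψ) (hT : TraceClass T) :
    Summable (fun i => ‖ψ (2 * i)‖) ∧ ∑' i, ‖ψ (2 * i)‖ ≤ traceNorm T := by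
  have hdiag : ∀ i, ‖⟪eb i, T (eb i)⟫_ℂ‖ = ‖ψ (2 * i)‖ := fun i => by rw [hH, two_mul]
  simpa only [hdiag] using hT.summable_and_tsum_norm_inner_diag_le_traceNorm

/-- If both Hankel matrices `h` and `k` are trace class, then
`Σ |φ(n) - φ(n+1)| ≤ ‖h‖₁ + ‖k‖₁ < ∞`. -/
theorem stmt1 (φ : ℕ → ℂ) (h k : l2 →L[ℂ] l2)
    (hTC : TraceClass h) (kTC : TraceClass k)
    (hH : HasHankel h (fun n => φ n - φ (n + 1)))
    (kH : HasHankel k (fun n => φ (n + 1) - φ (n + 2))) :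
    Summable (fun n => ‖φ n - φ (n + 1)‖) ∧
      ∑' n : ℕ, ‖φ n - φ (n + 1)‖ ≤ traceNorm h + traceNorm k := by
  obtain ⟨hEven, hEvenLe⟩ := hH.summable_and_tsum_norm_apply_two_mul_le_traceNorm hTC
  obtain ⟨hOdd, hOddLe⟩ := kH.summable_and_tsum_norm_apply_two_mul_le_traceNorm kTC
  have hAll := hEven.hasSum.even_add_odd (f := fun n => ‖φ n - φ (n + 1)‖) hOdd.hasSum
  exact ⟨hAll.summable, hAll.tsum_eq ▸ add_le_add hEvenLe hOddLe⟩
end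
end

section
/- Let φ : ℕ → ℂ with Σ|φ(n)-φ(n+1)| < ∞, let ψ₁(n) = Σ_{i≥0}(φ(n+2i)-φ(n+2i+1)), and suppose the Hankel matrix h = (φ(i+j)-φ(i+j+1))_{i,j≥0} is trace class with decomposition h = Σ_{i=1}^∞ x_i ⊙ y_i where x_i, y_i ∈ ℓ²(ℕ) and Σ ‖x_i‖₂‖y_i‖₂ = ‖h‖₁. Then for all k, l ≥ 0, ψ₁(k+l) = Σ_{i=1}^∞ Σ_{t=0}^∞ x_i(k+t) · conj(y_i(l+t)), with the double series absolutely convergent. -/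
open scoped ComplexConjugate
open Filter
noncomputable section

/-!
The entry `(k+t, l+t)` of `h` is `φ(k+l+2t) - φ(k+l+2t+1)` by the Hankel structure and
`Σᵢ xᵢ(k+t) conj(yᵢ(l+t))` by the decomposition, so summing over `t` gives `ψ₁(k+l)` as a
double series. Cauchy–Schwarz along shifted indices gives `Σₜ |xᵢ(k+t)| |yᵢ(l+t)| ≤ ‖xᵢ‖ ‖yᵢ‖`,
and `Σᵢ ‖xᵢ‖ ‖yᵢ‖ < ∞` makes the double series absolutely convergent, so the two sums commute.
-/

section ShiftedCauchySchwarz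

variable {ι κ E : Type*} [NormedAddCommGroup E]

lemma lp.sum_norm_comp_sq_le (w : lp (fun _ : ι => E) 2) {e : κ → ι}
    (he : Function.Injective e) (s : Finset κ) :
    ∑ t ∈ s, ‖w (e t)‖ ^ 2 ≤ ‖w‖ ^ 2 := by
  have := lp.sum_rpow_le_norm_rpow (p := 2) (by norm_num) w (s.map ⟨e, he⟩)
  rw [Finset.sum_map] at this
  exact_mod_cast this

lemma lp.sum_norm_mul_norm_comp_le (u v : lp (fun _ : ι => E) 2) {e₁ e₂ : κ → ι}
    (he₁ : Function.Injective e₁) (he₂ : Function.Injective e₂) (s : Finset κ) :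
    ∑ t ∈ s, ‖u (e₁ t)‖ * ‖v (e₂ t)‖ ≤ ‖u‖ * ‖v‖ :=
  calc ∑ t ∈ s, ‖u (e₁ t)‖ * ‖v (e₂ t)‖
      ≤ √(∑ t ∈ s, ‖u (e₁ t)‖ ^ 2) * √(∑ t ∈ s, ‖v (e₂ t)‖ ^ 2) :=
        Real.sum_mul_le_sqrt_mul_sqrt s _ _
    _ ≤ √(‖u‖ ^ 2) * √(‖v‖ ^ 2) := by
        gcongr
        exacts [lp.sum_norm_comp_sq_le u he₁ s, lp.sum_norm_comp_sq_le v he₂ s]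
    _ = ‖u‖ * ‖v‖ := by simp only [Real.sqrt_sq (norm_nonneg _)]

lemma lp.summable_norm_mul_norm_comp (u v : lp (fun _ : ι => E) 2) {e₁ e₂ : κ → ι}
    (he₁ : Function.Injective e₁) (he₂ : Function.Injective e₂) :
    Summable fun t => ‖u (e₁ t)‖ * ‖v (e₂ t)‖ :=
  summable_of_sum_le (fun _ => by positivity) (lp.sum_norm_mul_norm_comp_le u v he₁ he₂)

lemma lp.tsum_norm_mul_norm_comp_le (u v : lp (fun _ : ι => E) 2) {e₁ e₂ : κ → ι}
    (he₁ : Function.Injective e₁) (he₂ : Function.Injective e₂) :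
    ∑' t, ‖u (e₁ t)‖ * ‖v (e₂ t)‖ ≤ ‖u‖ * ‖v‖ :=
  (lp.summable_norm_mul_norm_comp u v he₁ he₂).tsum_le_of_sum_le
    (lp.sum_norm_mul_norm_comp_le u v he₁ he₂)

end ShiftedCauchySchwarz

lemma rankOne_apply (u v ξ : l2) : rankOne u v ξ = (inner ℂ v ξ : ℂ) • u := rfl

lemma inner_eb_left (m : ℕ) (u : l2) : (inner ℂ (eb m) u : ℂ) = u m := by
  simp [eb, lp.inner_single_left]

lemma inner_eb_right (u : l2) (n : ℕ) : (inner ℂ u (eb n) : ℂ) = conj (u n) := by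
  simp [eb, lp.inner_single_right]

namespace IsTCDecomp

variable {T : l2 →L[ℂ] l2} {x y : ℕ → l2}

lemma hasSum_inner_eb (hdec : IsTCDecomp T x y) (m n : ℕ) :
    HasSum (fun i => x i m * conj (y i n)) (inner ℂ (eb m) (T (eb n))) := by
  have h := (hdec.2 (eb n)).mapL (innerSL ℂ (eb m))
  simp only [innerSL_apply_apply, rankOne_apply, inner_smul_right, inner_eb_right] at h
  simpa only [inner_eb_left, mul_comm] using h

lemma summable_norm_mul_shift (hdec : IsTCDecomp T x y) (k l : ℕ) :
    Summable fun it : ℕ × ℕ => ‖x it.1 (k + it.2) * conj (y it.1 (l + it.2))‖ := by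
  have hk : Function.Injective (k + ·) := add_right_injective k
  have hl : Function.Injective (l + ·) := add_right_injective l
  simp only [norm_mul, RCLike.norm_conj]
  refine (summable_prod_of_nonneg fun _ => by positivity).2
    ⟨fun i => lp.summable_norm_mul_norm_comp (x i) (y i) hk hl, ?_⟩
  exact hdec.1.of_nonneg_of_le (fun _ => tsum_nonneg fun _ => by positivity)
    fun i => lp.tsum_norm_mul_norm_comp_le (x i) (y i) hk hl

end IsTCDecomp

theorem stmt7_general (φ : ℕ → ℂ)
    (ψ₁ : ℕ → ℂ)
    (hψ₁ : ∀ n : ℕ, ψ₁ n = ∑' i : ℕ, (φ (n + 2 * i) - φ (n + 2 * i + 1)))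
    (h : l2 →L[ℂ] l2) (hH : HasHankel h (fun n => φ n - φ (n + 1)))
    (x y : ℕ → l2) (hdec : IsTCDecomp h x y) :
    ∀ k l : ℕ,
      Summable (fun it : ℕ × ℕ =>
        ‖x it.1 (k + it.2) * conj (y it.1 (l + it.2))‖) ∧
      ψ₁ (k + l) = ∑' i : ℕ, ∑' t : ℕ, x i (k + t) * conj (y i (l + t)) := by
  intro k l
  have habs := hdec.summable_norm_mul_shift k l
  refine ⟨habs, ?_⟩
  have hdiag : ∀ t, HasSum (fun i => x i (k + t) * conj (y i (l + t)))
      (φ (k + l + 2 * t) - φ (k + l + 2 * t + 1)) := fun t => by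
    have := hdec.hasSum_inner_eb (k + t) (l + t)
    rwa [hH, show k + t + (l + t) = k + l + 2 * t by omega] at this
  calc ψ₁ (k + l) = ∑' t, (φ (k + l + 2 * t) - φ (k + l + 2 * t + 1)) := hψ₁ (k + l)
    _ = ∑' t, ∑' i, x i (k + t) * conj (y i (l + t)) :=
        tsum_congr fun t => (hdiag t).tsum_eq.symm
    _ = ∑' i, ∑' t, x i (k + t) * conj (y i (l + t)) :=
        Summable.tsum_comm (f := fun i t => x i (k + t) * conj (y i (l + t))) habs.of_norm

/-- If `h = Σᵢ xᵢ ⊙ yᵢ` is a trace-norm-attaining rank-one decomposition of the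
Hankel matrix `h` of `φ(·) - φ(·+1)`, then
`ψ₁(k+l) = Σᵢ Σₜ xᵢ(k+t) · conj(yᵢ(l+t))`, with absolute convergence. -/
theorem stmt7 (φ : ℕ → ℂ)
    (hsum : Summable (fun n => ‖φ n - φ (n + 1)‖))
    (ψ₁ : ℕ → ℂ)
    (hψ₁ : ∀ n : ℕ, ψ₁ n = ∑' i : ℕ, (φ (n + 2 * i) - φ (n + 2 * i + 1)))
    (h : l2 →L[ℂ] l2) (hH : HasHankel h (fun n => φ n - φ (n + 1)))
    (x y : ℕ → l2) (hdec : IsTCDecomp h x y)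
    (hnorm : ∑' i : ℕ, ‖x i‖ * ‖y i‖ = traceNorm h) :
    ∀ k l : ℕ,
      Summable (fun it : ℕ × ℕ =>
        ‖x it.1 (k + it.2) * conj (y it.1 (l + it.2))‖) ∧
      ψ₁ (k + l) = ∑' i : ℕ, ∑' t : ℕ, x i (k + t) * conj (y i (l + t)) :=
  stmt7_general φ ψ₁ hψ₁ h hH x y hdec
end
end

section
/- Let φ ∈ C (so h = (φ(i+j)-φ(i+j+1)) and k = (φ(i+j+1)-φ(i+j+2)) are trace class, c = lim φ(n)), and let ψ₁(n) = Σ_{i≥0}(φ(n+2i)-φ(n+2i+1)), ψ₂(n) = ψ₁(n+1). Then sup_n |ψ₁(n)| ≤ ‖h‖₁ and sup_n |ψ₂(n)| ≤ ‖k‖₁. -/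
/-!
Write `h = ∑ᵢ xᵢ ⊙ yᵢ`. The Hankel structure turns `ψ₁(n) = ∑ₜ (φ(n+2t) - φ(n+2t+1))` into the
sum of the matrix entries `⟨e_{n+t}, h e_t⟩ = ∑ᵢ conj (yᵢ(t)) xᵢ(n+t)`. The double sum is absolutely
convergent and, after exchanging the order of summation, Cauchy–Schwarz against the shifted
sequence `t ↦ xᵢ(n+t)` bounds its modulus by `∑ᵢ ‖xᵢ‖ ‖yᵢ‖`; taking the infimum over all
decompositions gives `‖h‖₁`. The bound for `ψ₂(n) = ψ₁(n+1)` is the same estimate for `k`.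
-/

open scoped ComplexConjugate
open Filter
noncomputable section

open scoped InnerProductSpace

section Shift

variable {E : Type*} [NormedAddCommGroup E]

private lemma two_toReal_pos : (0 : ℝ) < (2 : ENNReal).toReal := by norm_num

def lpShift (n : ℕ) (x : lp (fun _ : ℕ => E) 2) : lp (fun _ : ℕ => E) 2 :=
  ⟨fun t => x (n + t), memℓp_gen <|
    ((lp.memℓp x).summable two_toReal_pos).comp_injective (add_right_injective n)⟩

lemma norm_lpShift_le (n : ℕ) (x : lp (fun _ : ℕ => E) 2) : ‖lpShift n x‖ ≤ ‖x‖ := by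
  refine lp.norm_le_of_tsum_le two_toReal_pos (norm_nonneg _) ?_
  rw [lp.norm_rpow_eq_tsum two_toReal_pos]
  exact tsum_comp_le_tsum_of_inj ((lp.memℓp x).summable two_toReal_pos)
    (fun _ => by positivity) (add_right_injective n)

lemma tsum_norm_mul_norm_shift_le (n : ℕ) (x y : lp (fun _ : ℕ => E) 2) :
    (Summable fun t => ‖y t‖ * ‖x (n + t)‖) ∧ ∑' t, ‖y t‖ * ‖x (n + t)‖ ≤ ‖x‖ * ‖y‖ := by
  obtain ⟨hs, hle⟩ := lp.tsum_mul_le_mul_norm (by simpa using Real.HolderConjugate.two_two)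
    y (lpShift n x)
  refine ⟨hs, hle.trans ?_⟩
  rw [mul_comm ‖x‖]
  gcongr
  exact norm_lpShift_le n x

end Shift

lemma inner_eb_left_s14 (i : ℕ) (v : l2) : ⟪eb i, v⟫_ℂ = v i := by
  classical
  simp [eb, lp.inner_single_left]

lemma inner_eb_rankOne_eb (u v : l2) (i j : ℕ) :
    ⟪eb i, rankOne u v (eb j)⟫_ℂ = conj (v j) * u i := by
  rw [rankOne, ContinuousLinearMap.smulRight_apply, innerSL_apply_apply, inner_smul_right,
    inner_eb_left_s14, ← inner_conj_symm, inner_eb_left_s14]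

lemma IsTCDecomp.hasSum_inner_eb_s14 {T : l2 →L[ℂ] l2} {x y : ℕ → l2} (hd : IsTCDecomp T x y)
    (i j : ℕ) : HasSum (fun m => conj (y m j) * x m i) ⟪eb i, T (eb j)⟫_ℂ := by
  simpa only [innerSL_apply_apply, inner_eb_rankOne_eb] using
    (hd.2 (eb j)).mapL (innerSL ℂ (eb i))

theorem IsTCDecomp.norm_tsum_inner_shift_le {T : l2 →L[ℂ] l2} {x y : ℕ → l2}
    (hd : IsTCDecomp T x y) (n : ℕ) :
    ‖∑' t, ⟪eb (n + t), T (eb t)⟫_ℂ‖ ≤ ∑' m, ‖x m‖ * ‖y m‖ := by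
  set F : ℕ → ℕ → ℂ := fun m t => conj (y m t) * x m (n + t)
  have hF_norm : ∀ m t, ‖F m t‖ = ‖y m t‖ * ‖x m (n + t)‖ := fun m t => by simp [F]
  have hrow : ∀ m, (Summable fun t => ‖F m t‖) ∧ ∑' t, ‖F m t‖ ≤ ‖x m‖ * ‖y m‖ := fun m => by
    simpa only [hF_norm] using tsum_norm_mul_norm_shift_le n (x m) (y m)
  have hF : Summable (Function.uncurry F) := by
    refine Summable.of_norm ((summable_prod_of_nonneg fun _ => norm_nonneg _).2
      ⟨fun m => (hrow m).1, ?_⟩)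
    exact hd.1.of_nonneg_of_le (fun _ => tsum_nonneg fun _ => norm_nonneg _) fun m => (hrow m).2
  have hswap : ∑' t, ⟪eb (n + t), T (eb t)⟫_ℂ = ∑' m, ∑' t, F m t := by
    rw [← hF.tsum_comm]
    exact tsum_congr fun t => ((hd.hasSum_inner_eb_s14 (n + t) t).tsum_eq).symm
  rw [hswap]
  refine tsum_of_norm_bounded hd.1.hasSum fun m => ?_
  exact (norm_tsum_le_tsum_norm (hrow m).1).trans (hrow m).2

theorem TraceClass.norm_tsum_inner_shift_le_traceNorm {T : l2 →L[ℂ] l2} (hT : TraceClass T)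
    (n : ℕ) : ‖∑' t, ⟪eb (n + t), T (eb t)⟫_ℂ‖ ≤ traceNorm T := by
  obtain ⟨x, y, hd⟩ := hT
  refine le_csInf ⟨_, x, y, hd, rfl⟩ ?_
  rintro _ ⟨x', y', hd', rfl⟩
  exact hd'.norm_tsum_inner_shift_le n

lemma HasHankel.tsum_inner_shift {T : l2 →L[ℂ] l2} {a : ℕ → ℂ} (hT : HasHankel T a) (n : ℕ) :
    ∑' t, ⟪eb (n + t), T (eb t)⟫_ℂ = ∑' t, a (n + 2 * t) :=
  tsum_congr fun t => by rw [hT, add_assoc, two_mul]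

/-- If `h` and `k` are the (trace-class) Hankel matrices of `φ(·) - φ(·+1)` and
`φ(·+1) - φ(·+2)`, then `sup_n |ψ₁(n)| ≤ ‖h‖₁` and `sup_n |ψ₂(n)| ≤ ‖k‖₁`. -/
theorem stmt14 (φ : ℕ → ℂ) (h k : l2 →L[ℂ] l2)
    (hTC : TraceClass h) (kTC : TraceClass k)
    (hH : HasHankel h (fun n => φ n - φ (n + 1)))
    (kH : HasHankel k (fun n => φ (n + 1) - φ (n + 2)))
    (ψ₁ ψ₂ : ℕ → ℂ)
    (hψ₁ : ∀ n : ℕ, ψ₁ n = ∑' i : ℕ, (φ (n + 2 * i) - φ (n + 2 * i + 1)))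
    (hψ₂ : ∀ n : ℕ, ψ₂ n = ψ₁ (n + 1)) :
    (∀ n : ℕ, ‖ψ₁ n‖ ≤ traceNorm h) ∧
    (∀ n : ℕ, ‖ψ₂ n‖ ≤ traceNorm k) := by
  refine ⟨fun n => ?_, fun n => ?_⟩
  · rw [hψ₁, ← hH.tsum_inner_shift]
    exact hTC.norm_tsum_inner_shift_le_traceNorm n
  · have hψ₂_eq : ψ₂ n = ∑' t, ⟪eb (n + t), k (eb t)⟫_ℂ := by
      rw [hψ₂, hψ₁, kH.tsum_inner_shift]
      exact tsum_congr fun t => by ring_nf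
    rw [hψ₂_eq]
    exact kTC.norm_tsum_inner_shift_le_traceNorm n
end
end
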